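/- Let n ≥ 6s, ν ≥ 2, and let {U_i = U[z_i,λ_i]}_{i=1}^ν be a δ-interacting family of bubbles. There exists a constant C > 0 depending only on n, s, ν such that, provided δ > 0 is small enough, ‖σ^p − Σ_{i=1}^ν U_i^p‖_{**} ≤ C, where σ = Σ_{i=1}^ν U_i. -/

import Mathlib

open MeasureTheory Real Filter
open scoped FourierTransform ENNReal Topology

noncomputable section

abbrev Euc (n : ℕ) := EuclideanSpace ℝ (Fin n)

/-- Fourier transform of a real-valued function on `ℝⁿ`. -/
def ft (n : ℕ) (u : Euc n → ℝ) : Euc n → ℂ :=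
  𝓕 (fun x => (u x : ℂ))

/-- Square of the homogeneous Sobolev norm `‖u‖_{Ḣ^s}²`. -/
def hsNormSq (n : ℕ) (s : ℝ) (u : Euc n → ℝ) : ℝ :=
  ∫ ξ : Euc n, ‖ξ‖ ^ (2*s) * ‖ft n u ξ‖ ^ 2

/-- The homogeneous Sobolev norm `‖u‖_{Ḣ^s}`. -/
def hsNorm (n : ℕ) (s : ℝ) (u : Euc n → ℝ) : ℝ :=
  Real.sqrt (hsNormSq n s u)

/-- Membership in the homogeneous Sobolev space `Ḣ^s(ℝⁿ)`. -/
def memHs (n : ℕ) (s : ℝ) (u : Euc n → ℝ) : Prop :=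
  Integrable (fun ξ : Euc n => ‖ξ‖ ^ (2*s) * ‖ft n u ξ‖ ^ 2)

/-- The `Ḣ^s` inner product. -/
def hsInner (n : ℕ) (s : ℝ) (f g : Euc n → ℝ) : ℂ :=
  ∫ ξ : Euc n, ((‖ξ‖ ^ (2*s) : ℝ) : ℂ) * (ft n f ξ * (starRingEnd ℂ) (ft n g ξ))

/-- `fracEq n s f g` encodes the equation `(-Δ)^s f = g` via the Fourier transform
`𝓕((-Δ)^s f)(ξ) = ‖ξ‖^{2s} 𝓕f(ξ)`. -/
def fracEq (n : ℕ) (s : ℝ) (f g : Euc n → ℝ) : Prop :=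
  ∀ ξ : Euc n, ((‖ξ‖ ^ (2*s) : ℝ) : ℂ) * ft n f ξ = ft n g ξ

/-- The critical exponent `p = (n+2s)/(n-2s)`. -/
def pexp (n : ℕ) (s : ℝ) : ℝ := ((n:ℝ) + 2*s) / ((n:ℝ) - 2*s)

/-- The normalizing constant `α_{n,s}`. -/
def bubbleConst (n : ℕ) (s : ℝ) : ℝ :=
  2 ^ (((n:ℝ) - 2*s)/2) *
    (Real.Gamma (((n:ℝ) + 2*s)/2) / Real.Gamma (((n:ℝ) - 2*s)/2)) ^ (((n:ℝ) - 2*s)/(4*s))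

/-- The bubble `U[z,λ]`. -/
def bubble (n : ℕ) (s : ℝ) (z : Euc n) (lam : ℝ) (x : Euc n) : ℝ :=
  bubbleConst n s * (lam / (1 + lam ^ 2 * ‖x - z‖ ^ 2)) ^ (((n:ℝ) - 2*s)/2)

/-- The functions `Z^a[z,λ]`, `a = 1,…,n+1`:
for `a ≤ n`, `Z^a = λ⁻¹ ∂U[z,λ]/∂z_a`, and `Z^{n+1} = λ ∂U[z,λ]/∂λ`. -/
def bubbleZ (n : ℕ) (s : ℝ) (z : Euc n) (lam : ℝ) (a : Fin (n+1)) (x : Euc n) : ℝ :=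
  if h : (a : ℕ) < n then
    lam⁻¹ *
      deriv (fun t : ℝ => bubble n s (z + t • EuclideanSpace.single (⟨(a : ℕ), h⟩ : Fin n) 1) lam x) 0
  else
    lam * deriv (fun t : ℝ => bubble n s z t x) lam

/-- The interaction quantity `q_{ij}`. -/
def interq (n : ℕ) (s : ℝ) (z₁ z₂ : Euc n) (l₁ l₂ : ℝ) : ℝ :=
  (l₁/l₂ + l₂/l₁ + l₁*l₂*‖z₁ - z₂‖ ^ 2) ^ (-(((n:ℝ) - 2*s)/2))

/-- A ν-tuple of bubbles is δ-interacting. -/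
def deltaInteracting (n : ℕ) (s : ℝ) (ν : ℕ) (z : Fin ν → Euc n) (lam : Fin ν → ℝ) (δ : ℝ) : Prop :=
  ∀ i j : Fin ν, i ≠ j → interq n s (z i) (z j) (lam i) (lam j) ≤ δ

/-- `𝒬 = max_{i≠j} q_{ij}`. -/
def scrQ (n : ℕ) (s : ℝ) (ν : ℕ) (z : Fin ν → Euc n) (lam : Fin ν → ℝ) : ℝ :=
  sSup {q : ℝ | ∃ i j : Fin ν, i ≠ j ∧ q = interq n s (z i) (z j) (lam i) (lam j)}

/-- `ℛ_{ij} = max{√(λ_i/λ_j), √(λ_j/λ_i), √(λ_iλ_j)|z_i−z_j|}`. -/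
def interR {n : ℕ} (z₁ z₂ : Euc n) (l₁ l₂ : ℝ) : ℝ :=
  max (max (Real.sqrt (l₁/l₂)) (Real.sqrt (l₂/l₁))) (Real.sqrt (l₁*l₂) * ‖z₁ - z₂‖)

/-- `ℛ = (1/2) min_{i≠j} ℛ_{ij}`. -/
def scrR (n : ℕ) (ν : ℕ) (z : Fin ν → Euc n) (lam : Fin ν → ℝ) : ℝ :=
  (1/2) * sInf {r : ℝ | ∃ i j : Fin ν, i ≠ j ∧ r = interR (z i) (z j) (lam i) (lam j)}

/-- Japanese bracket, as a function of `|y|`. -/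
def jb (t : ℝ) : ℝ := Real.sqrt (1 + t ^ 2)

/-- The weight `v_i^{in}` (both the `n > 6s` and the `n = 6s` versions). -/
def vin (n : ℕ) (s R : ℝ) (z : Euc n) (lam : ℝ) (x : Euc n) : ℝ :=
  if (n:ℝ) = 6*s then
    (if lam * ‖x - z‖ < R ^ 2 then
      lam ^ (4*s) * R ^ (-(4*s)) * jb (lam * ‖x - z‖) ^ (-(4*s)) else 0)
  else
    (if lam * ‖x - z‖ < R then
      lam ^ (((n:ℝ) + 2*s)/2) * R ^ (2*s - (n:ℝ)) * jb (lam * ‖x - z‖) ^ (-(4*s)) else 0)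

/-- The weight `v_i^{out}`. -/
def vout (n : ℕ) (s R : ℝ) (z : Euc n) (lam : ℝ) (x : Euc n) : ℝ :=
  if (n:ℝ) = 6*s then
    (if R ^ 2 ≤ lam * ‖x - z‖ then
      lam ^ (4*s) * R ^ (-(2*s)) * (lam * ‖x - z‖) ^ (-(5*s)) else 0)
  else
    (if R ≤ lam * ‖x - z‖ then
      lam ^ (((n:ℝ) + 2*s)/2) * R ^ (-(4*s)) * (lam * ‖x - z‖) ^ (2*s - (n:ℝ)) else 0)

/-- The weight `w_i^{in}`. -/
def win (n : ℕ) (s R : ℝ) (z : Euc n) (lam : ℝ) (x : Euc n) : ℝ :=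
  if (n:ℝ) = 6*s then
    (if lam * ‖x - z‖ < R ^ 2 then
      lam ^ (2*s) * R ^ (-(4*s)) * jb (lam * ‖x - z‖) ^ (-(2*s)) else 0)
  else
    (if lam * ‖x - z‖ < R then
      lam ^ (((n:ℝ) - 2*s)/2) * R ^ (2*s - (n:ℝ)) * jb (lam * ‖x - z‖) ^ (-(2*s)) else 0)

/-- The weight `w_i^{out}`. -/
def wout (n : ℕ) (s R : ℝ) (z : Euc n) (lam : ℝ) (x : Euc n) : ℝ :=
  if (n:ℝ) = 6*s then
    (if R ^ 2 ≤ lam * ‖x - z‖ then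
      lam ^ (2*s) * R ^ (-(2*s)) * (lam * ‖x - z‖) ^ (-(3*s)) else 0)
  else
    (if R ≤ lam * ‖x - z‖ then
      lam ^ (((n:ℝ) - 2*s)/2) * R ^ (-(4*s)) * (lam * ‖x - z‖) ^ (4*s - (n:ℝ)) else 0)

/-- `𝒱 = Σ_i (v_i^{in} + v_i^{out})`. -/
def mcV (n : ℕ) (s : ℝ) (ν : ℕ) (z : Fin ν → Euc n) (lam : Fin ν → ℝ) (x : Euc n) : ℝ :=
  ∑ i, (vin n s (scrR n ν z lam) (z i) (lam i) x + vout n s (scrR n ν z lam) (z i) (lam i) x)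

/-- `𝒲 = Σ_i (w_i^{in} + w_i^{out})`. -/
def mcW (n : ℕ) (s : ℝ) (ν : ℕ) (z : Fin ν → Euc n) (lam : Fin ν → ℝ) (x : Euc n) : ℝ :=
  ∑ i, (win n s (scrR n ν z lam) (z i) (lam i) x + wout n s (scrR n ν z lam) (z i) (lam i) x)

/-- Weighted `L∞` norm `sup_x |f(x)|/W(x)`, valued in `ℝ≥0∞`. -/
def wnorm (n : ℕ) (f W : Euc n → ℝ) : ℝ≥0∞ :=
  ⨆ x : Euc n, ENNReal.ofReal (|f x| / W x)

/-- `σ = Σ_i U[z_i, λ_i]`. -/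
def sigmaB (n : ℕ) (s : ℝ) (ν : ℕ) (z : Fin ν → Euc n) (lam : Fin ν → ℝ) (x : Euc n) : ℝ :=
  ∑ i, bubble n s (z i) (lam i) x

/-- `Σ_{i,a} c_i^a U_i^{p-1} Z_i^a`. -/
def interTerm (n : ℕ) (s : ℝ) (ν : ℕ) (z : Fin ν → Euc n) (lam : Fin ν → ℝ)
    (c : Fin ν → Fin (n+1) → ℝ) (x : Euc n) : ℝ :=
  ∑ i, ∑ a, c i a * (bubble n s (z i) (lam i) x) ^ (pexp n s - 1) * bubbleZ n s (z i) (lam i) a x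

/-- Orthogonality conditions `∫ f U_i^{p-1} Z_i^a = 0` for all `i, a`. -/
def orthZ (n : ℕ) (s : ℝ) (ν : ℕ) (z : Fin ν → Euc n) (lam : Fin ν → ℝ) (f : Euc n → ℝ) : Prop :=
  ∀ (i : Fin ν) (a : Fin (n+1)),
    ∫ x : Euc n, f x * (bubble n s (z i) (lam i) x) ^ (pexp n s - 1) *
      bubbleZ n s (z i) (lam i) a x = 0

/-- `Γ(u) = ‖(-Δ)^s u - |u|^{p-1}u‖_{Ḣ^{-s}}`, computed on the Fourier side. -/
def gammaU (n : ℕ) (s : ℝ) (u : Euc n → ℝ) : ℝ :=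
  Real.sqrt (∫ ξ : Euc n, ‖ξ‖ ^ (-(2*s)) *
    ‖((‖ξ‖ ^ (2*s) : ℝ) : ℂ) * ft n u ξ -
      ft n (fun x => |u x| ^ (pexp n s - 1) * u x) ξ‖ ^ 2)

/-- The Riesz potential `Φ_{n,s}(x) = γ_{n,s}|x|^{2s-n}`. -/
def rieszK (n : ℕ) (s : ℝ) (x : Euc n) : ℝ :=
  (Real.Gamma (((n:ℝ) - 2*s)/2) / (Real.pi ^ ((n:ℝ)/2) * 2 ^ (2*s) * Real.Gamma s)) *
    ‖x‖ ^ (2*s - (n:ℝ))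

/-!
Fix `x` and let `U_i` be the largest bubble at `x`. By the mean value inequality,
`|σ^p - ∑ U_k^p| ≲ ∑_{j ≠ i} U_i^{p-1} U_j`, so it suffices to bound each product `U_i^{p-1} U_j`
by `α^p (v_i + v_j)` at `x`. In the variables `μ = λ_j/λ_i`, `a = λ_i|x - z_i|`, `b = λ_j|x - z_j|`
both sides are monomials in `⟨a⟩`, `⟨b⟩`, `a`, `b`, `μ`, `ℛ`. The choice of `i` gives
`μ⟨a⟩² ≤ ⟨b⟩²`, and the separation `2ℛ ≤ ℛ_ij` gives, through the triangle inequality,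
`ℛ² ≤ μ⟨a⟩²` or `μℛ² ≤ ⟨b⟩²`; these two facts decide every case. Finally,
`δ = 12^{-(n-2s)/2}` forces `ℛ_ij ≥ 2` for all pairs, hence `ℛ ≥ 1`.
-/

lemma jb_sq (t : ℝ) : jb t ^ 2 = 1 + t ^ 2 :=
  Real.sq_sqrt (by positivity)

lemma one_le_jb (t : ℝ) : 1 ≤ jb t :=
  Real.one_le_sqrt.2 (le_add_of_nonneg_right (sq_nonneg t))

lemma jb_pos (t : ℝ) : 0 < jb t :=
  one_pos.trans_le (one_le_jb t)

lemma le_jb (t : ℝ) : t ≤ jb t :=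
  Real.le_sqrt_of_sq_le (by linarith)

section Bubble

variable {n : ℕ} {s : ℝ}

lemma bubbleConst_pos (hs : 0 < s) (hn : 2 * s < n) : 0 < bubbleConst n s :=
  mul_pos (Real.rpow_pos_of_pos two_pos _) <| Real.rpow_pos_of_pos
    (div_pos (Real.Gamma_pos_of_pos (by linarith)) (Real.Gamma_pos_of_pos (by linarith))) _

lemma bubble_eq (z : Euc n) (lam : ℝ) (x : Euc n) :
    bubble n s z lam x =
      bubbleConst n s * (lam / jb (lam * ‖x - z‖) ^ 2) ^ (((n:ℝ) - 2*s)/2) := by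
  rw [bubble, jb_sq, mul_pow]

lemma bubble_pos (hs : 0 < s) (hn : 2 * s < n) (z : Euc n) {lam : ℝ} (hl : 0 < lam)
    (x : Euc n) : 0 < bubble n s z lam x := by
  rw [bubble_eq]
  exact mul_pos (bubbleConst_pos hs hn) (Real.rpow_pos_of_pos (div_pos hl (pow_pos (jb_pos _) 2)) _)

lemma one_lt_pexp (hs : 0 < s) (hn : 2 * s < n) : 1 < pexp n s := by
  rw [pexp, lt_div_iff₀ (by linarith)]
  linarith

lemma mul_pexp_sub_one (hn : 2 * s < n) : ((n:ℝ) - 2*s)/2 * (pexp n s - 1) = 2 * s := by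
  rw [pexp]
  field_simp [(by linarith : (n:ℝ) - 2*s ≠ 0)]
  ring

lemma bubble_rpow_pexp_sub_one (hs : 0 < s) (hn : 2 * s < n) (z : Euc n) {lam : ℝ} (hl : 0 < lam)
    (x : Euc n) :
    bubble n s z lam x ^ (pexp n s - 1) =
      bubbleConst n s ^ (pexp n s - 1) * lam ^ (2*s) * jb (lam * ‖x - z‖) ^ (-(4*s)) := by
  have hX : 0 ≤ lam / jb (lam * ‖x - z‖) ^ 2 := by positivity
  rw [bubble_eq, Real.mul_rpow (bubbleConst_pos hs hn).le (Real.rpow_nonneg hX _),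
    ← Real.rpow_mul hX, mul_pexp_sub_one hn, Real.div_rpow hl.le (by positivity),
    ← Real.rpow_natCast, ← Real.rpow_mul (jb_pos _).le, Real.rpow_neg (jb_pos _).le]
  push_cast
  ring_nf

end Bubble

section Geometry

variable {n : ℕ} {s : ℝ}

lemma mul_jb_sq_le_of_bubble_le (hs : 0 < s) (hn : 2 * s < n) {zi zj : Euc n} {li lj : ℝ}
    (hli : 0 < li) (hlj : 0 < lj) {x : Euc n} (h : bubble n s zj lj x ≤ bubble n s zi li x) :
    lj / li * jb (li * ‖x - zi‖) ^ 2 ≤ jb (lj * ‖x - zj‖) ^ 2 := by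
  have hA := pow_pos (jb_pos (li * ‖x - zi‖)) 2
  have hB := pow_pos (jb_pos (lj * ‖x - zj‖)) 2
  rw [bubble_eq, bubble_eq] at h
  have h' := (Real.rpow_le_rpow_iff (div_pos hlj hB).le (div_pos hli hA).le
    (by linarith : (0:ℝ) < ((n:ℝ) - 2*s)/2)).1 (le_of_mul_le_mul_left h (bubbleConst_pos hs hn))
  rw [div_le_div_iff₀ hB hA] at h'
  rw [div_mul_eq_mul_div, div_le_iff₀ hli]
  linarith

lemma interR_dichotomy {zi zj : Euc n} {li lj R : ℝ} (hli : 0 < li) (hlj : 0 < lj) (hR : 0 ≤ R)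
    (h : 2 * R ≤ interR zi zj li lj) (x : Euc n) :
    R ^ 2 ≤ lj / li * jb (li * ‖x - zi‖) ^ 2 ∨ lj / li * R ^ 2 ≤ jb (lj * ‖x - zj‖) ^ 2 := by
  set m := Real.sqrt (lj / li) with hm_def
  have hm : 0 < m := Real.sqrt_pos.2 (div_pos hlj hli)
  have hm2 : m ^ 2 = lj / li := Real.sq_sqrt (div_pos hlj hli).le
  have hinv : Real.sqrt (li / lj) = m⁻¹ := by rw [← Real.sqrt_inv, inv_div]
  have hprod : Real.sqrt (li * lj) = li * m := by
    rw [hm_def, ← Real.sqrt_sq hli.le, ← Real.sqrt_mul (sq_nonneg li), Real.sqrt_sq hli.le]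
    congr 1
    field_simp
  have hA := le_jb (li * ‖x - zi‖)
  have hA1 := one_le_jb (li * ‖x - zi‖)
  have hB := le_jb (lj * ‖x - zj‖)
  have hB1 := one_le_jb (lj * ‖x - zj‖)
  suffices key : R ≤ m * jb (li * ‖x - zi‖) ∨ m * R ≤ jb (lj * ‖x - zj‖) by
    rw [← hm2]
    rcases key with key | key
    · left
      calc R ^ 2 ≤ (m * jb (li * ‖x - zi‖)) ^ 2 := pow_le_pow_left₀ hR key 2
        _ = _ := by ring
    · right
      calc m ^ 2 * R ^ 2 = (m * R) ^ 2 := by ring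
        _ ≤ _ := pow_le_pow_left₀ (mul_nonneg hm.le hR) key 2
  rw [interR, hinv, hprod, ← hm_def] at h
  rcases le_max_iff.1 h with h | h
  · rcases le_max_iff.1 h with h | h
    · right
      have := mul_le_mul_of_nonneg_left h hm.le
      rw [mul_inv_cancel₀ hm.ne'] at this
      linarith
    · left
      exact (by linarith : R ≤ m).trans (le_mul_of_one_le_right hm.le hA1)
  · have htri : ‖zi - zj‖ ≤ ‖x - zi‖ + ‖x - zj‖ := by
      simpa only [dist_eq_norm] using dist_triangle_left zi zj x
    have hsplit : li * m * ‖zi - zj‖ ≤ m * (li * ‖x - zi‖) + (lj * ‖x - zj‖) / m := by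
      have : li * m = lj / m := by
        rw [eq_div_iff hm.ne', mul_assoc, ← sq, hm2]
        field_simp
      calc li * m * ‖zi - zj‖ ≤ li * m * (‖x - zi‖ + ‖x - zj‖) := by gcongr
        _ = m * (li * ‖x - zi‖) + (li * m) * ‖x - zj‖ := by ring
        _ = _ := by rw [this]; ring
    by_cases hcase : R ≤ m * (li * ‖x - zi‖)
    · exact .inl (hcase.trans (mul_le_mul_of_nonneg_left hA hm.le))
    · right
      have : m * R ≤ lj * ‖x - zj‖ := by
        rw [← le_div_iff₀' hm]
        linarith
      exact this.trans hB

end Geometry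

section Weights

variable {n : ℕ} {s : ℝ}

def vProfile (n : ℕ) (s R t : ℝ) : ℝ :=
  if (n:ℝ) = 6*s then
    if t < R ^ 2 then R ^ (-(4*s)) * jb t ^ (-(4*s)) else R ^ (-(2*s)) * t ^ (-(5*s))
  else
    if t < R then R ^ (2*s - n) * jb t ^ (-(4*s)) else R ^ (-(4*s)) * t ^ (2*s - n)

lemma vin_add_vout_eq (R : ℝ) (z : Euc n) (lam : ℝ) (x : Euc n) :
    vin n s R z lam x + vout n s R z lam x =
      lam ^ (((n:ℝ) + 2*s)/2) * vProfile n s R (lam * ‖x - z‖) := by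
  by_cases hn : (n:ℝ) = 6*s
  · have he : ((n:ℝ) + 2*s)/2 = 4*s := by rw [hn]; ring
    simp only [vin, vout, vProfile, if_pos hn, he]
    split_ifs <;> first | ring1 | (exfalso; linarith)
  · simp only [vin, vout, vProfile, if_neg hn]
    split_ifs <;> first | ring1 | (exfalso; linarith)

lemma vProfile_pos {R : ℝ} (hR : 0 < R) (t : ℝ) : 0 < vProfile n s R t := by
  have := jb_pos t
  unfold vProfile
  split_ifs with h₁ h₂ h₂
  · positivity
  · have : 0 < t := (pow_pos hR 2).trans_le (not_lt.1 h₂)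
    positivity
  · positivity
  · have : 0 < t := hR.trans_le (not_lt.1 h₂)
    positivity

end Weights

section Core

open Real

variable {n : ℕ} {s μ R a b : ℝ}

lemma log_mul_sq {u v : ℝ} (hu : 0 < u) (hv : 0 < v) : log (u * v ^ 2) = log u + 2 * log v := by
  rw [log_mul hu.ne' (pow_ne_zero 2 hv.ne'), log_pow]
  push_cast
  ring

lemma log_sq (v : ℝ) : log (v ^ 2) = 2 * log v := by
  rw [log_pow]
  push_cast
  ring

/-- `U_i^{p-1} U_j / (α^p λ_i^{(n+2s)/2})` in the variables `μ = λ_j/λ_i`, `a = λ_i|x - z_i|`,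
`b = λ_j|x - z_j|`. -/
def pairProfile (n : ℕ) (s μ a b : ℝ) : ℝ :=
  jb a ^ (-(4*s)) * μ ^ (((n:ℝ) - 2*s)/2) * jb b ^ (2*s - n)

/- Below, `hmax` encodes `U_j ≤ U_i` and `hsep` the separation `2ℛ ≤ ℛ_ij`. After taking
logarithms, each case is a linear inequality in `log μ`, `log R`, `log a`, `log b`, `log ⟨a⟩`,
`log ⟨b⟩`. -/

lemma pairProfile_le_outer_of_ne (hs : 0 < s) (h6 : 6 * s ≤ n) (hμ : 0 < μ) (hR : 0 < R)
    (hmax : μ * jb a ^ 2 ≤ jb b ^ 2) (hRa : R ≤ a) :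
    pairProfile n s μ a b ≤ R ^ (-(4*s)) * a ^ (2*s - n) := by
  have hA := jb_pos a
  have hB := jb_pos b
  have ha := hR.trans_le hRa
  have lmax := log_le_log (by positivity) hmax
  rw [log_mul_sq hμ hA, log_sq] at lmax
  have lRa := log_le_log hR hRa
  have la := log_le_log ha (le_jb a)
  have he : 0 ≤ ((n:ℝ) - 2*s)/2 := by linarith
  simp only [pairProfile, rpow_def_of_pos hA, rpow_def_of_pos hμ, rpow_def_of_pos hB,
    rpow_def_of_pos hR, rpow_def_of_pos ha, ← exp_add, exp_le_exp]
  linarith [mul_le_mul_of_nonneg_left lmax he, mul_le_mul_of_nonneg_left lRa hs.le,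
    mul_le_mul_of_nonneg_left la hs.le, mul_le_mul_of_nonneg_left la he,
    mul_le_mul_of_nonneg_left lRa he]

lemma pairProfile_le_inner_of_ne (hs : 0 < s) (h6 : 6 * s ≤ n) (hn : (n:ℝ) ≠ 6 * s)
    (hμ : 0 < μ) (hR : 0 < R) (hmax : μ * jb a ^ 2 ≤ jb b ^ 2)
    (hsep : R ^ 2 ≤ μ * jb a ^ 2 ∨ μ * R ^ 2 ≤ jb b ^ 2) :
    pairProfile n s μ a b ≤
      R ^ (2*s - n) * jb a ^ (-(4*s)) + μ ^ (((n:ℝ) + 2*s)/2) * vProfile n s R b := by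
  have hA := jb_pos a
  have hB := jb_pos b
  have he : 0 ≤ ((n:ℝ) - 2*s)/2 := by linarith
  have he' : 0 ≤ ((n:ℝ) - 2*s)/2 - 2*s := by linarith
  have lmax := log_le_log (by positivity) hmax
  rw [log_mul_sq hμ hA, log_sq] at lmax
  rcases hsep.symm with hsep | hsep
  · refine le_add_of_le_of_nonneg ?_ (mul_nonneg (rpow_nonneg hμ.le _) (vProfile_pos hR b).le)
    have l := log_le_log (by positivity) hsep
    rw [log_mul_sq hμ hR, log_sq] at l
    simp only [pairProfile, rpow_def_of_pos hA, rpow_def_of_pos hμ, rpow_def_of_pos hB,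
      rpow_def_of_pos hR, ← exp_add, exp_le_exp]
    linarith [mul_le_mul_of_nonneg_left l he]
  · have l := log_le_log (by positivity) hsep
    rw [log_mul_sq hμ hA, log_sq] at l
    refine le_add_of_nonneg_of_le (by positivity) ?_
    simp only [vProfile, if_neg hn]
    split_ifs with hbR
    · simp only [pairProfile, rpow_def_of_pos hA, rpow_def_of_pos hμ, rpow_def_of_pos hB,
        rpow_def_of_pos hR, ← exp_add, exp_le_exp]
      linarith [mul_le_mul_of_nonneg_left l he, mul_le_mul_of_nonneg_left lmax he',
        mul_le_mul_of_nonneg_left l hs.le]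
    · have hb := hR.trans_le (not_lt.1 hbR)
      have lb := log_le_log hb (le_jb b)
      simp only [pairProfile, rpow_def_of_pos hA, rpow_def_of_pos hμ, rpow_def_of_pos hB,
        rpow_def_of_pos hR, rpow_def_of_pos hb, ← exp_add, exp_le_exp]
      linarith [mul_le_mul_of_nonneg_left l hs.le, mul_le_mul_of_nonneg_left lb he]

lemma pairProfile_eq_of_eq (hn : (n:ℝ) = 6 * s) :
    pairProfile n s μ a b = jb a ^ (-(4*s)) * μ ^ (2*s) * jb b ^ (-(4*s)) := by
  rw [pairProfile, hn]
  ring_nf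

lemma pairProfile_le_outer_of_eq (hs : 0 < s) (hn : (n:ℝ) = 6 * s) (hμ : 0 < μ) (hR : 1 ≤ R)
    (hmax : μ * jb a ^ 2 ≤ jb b ^ 2) (hRa : R ^ 2 ≤ a) :
    pairProfile n s μ a b ≤ R ^ (-(2*s)) * a ^ (-(5*s)) := by
  have hR0 : 0 < R := one_pos.trans_le hR
  have hA := jb_pos a
  have hB := jb_pos b
  have ha := (pow_pos hR0 2).trans_le hRa
  have lmax := log_le_log (by positivity) hmax
  rw [log_mul_sq hμ hA, log_sq] at lmax
  have lRa := log_le_log (by positivity) hRa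
  rw [log_sq] at lRa
  have la := log_le_log ha (le_jb a)
  have lR := log_nonneg hR
  rw [pairProfile_eq_of_eq hn]
  simp only [rpow_def_of_pos hA, rpow_def_of_pos hμ, rpow_def_of_pos hB,
    rpow_def_of_pos hR0, rpow_def_of_pos ha, ← exp_add, exp_le_exp]
  linarith [mul_le_mul_of_nonneg_left lmax hs.le, mul_le_mul_of_nonneg_left lRa hs.le,
    mul_le_mul_of_nonneg_left la hs.le, mul_nonneg hs.le lR]

lemma pairProfile_le_inner_of_eq (hs : 0 < s) (hn : (n:ℝ) = 6 * s) (hμ : 0 < μ) (hR : 1 ≤ R)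
    (hmax : μ * jb a ^ 2 ≤ jb b ^ 2) (hsep : R ^ 2 ≤ μ * jb a ^ 2 ∨ μ * R ^ 2 ≤ jb b ^ 2) :
    pairProfile n s μ a b ≤
      R ^ (-(4*s)) * jb a ^ (-(4*s)) + μ ^ (((n:ℝ) + 2*s)/2) * vProfile n s R b := by
  have hR0 : 0 < R := one_pos.trans_le hR
  have hA := jb_pos a
  have hB := jb_pos b
  have lA := log_nonneg (one_le_jb a)
  have lR := log_nonneg hR
  have lmax := log_le_log (by positivity) hmax
  rw [log_mul_sq hμ hA, log_sq] at lmax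
  rw [pairProfile_eq_of_eq hn]
  by_cases hfar : μ * R ^ 2 ≤ jb b ^ 2
  · refine le_add_of_le_of_nonneg ?_ (mul_nonneg (rpow_nonneg hμ.le _) (vProfile_pos hR0 b).le)
    have l := log_le_log (by positivity) hfar
    rw [log_mul_sq hμ hR0, log_sq] at l
    simp only [rpow_def_of_pos hA, rpow_def_of_pos hμ, rpow_def_of_pos hB,
      rpow_def_of_pos hR0, ← exp_add, exp_le_exp]
    linarith [mul_le_mul_of_nonneg_left l hs.le]
  · have l := log_le_log (by positivity) (hsep.resolve_right hfar)
    rw [log_mul_sq hμ hA, log_sq] at l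
    refine le_add_of_nonneg_of_le (by positivity) ?_
    have e : ((n:ℝ) + 2*s)/2 = 4*s := by rw [hn]; ring
    simp only [vProfile, if_pos hn, e]
    split_ifs with hbR
    · simp only [rpow_def_of_pos hA, rpow_def_of_pos hμ, rpow_def_of_pos hB,
        rpow_def_of_pos hR0, ← exp_add, exp_le_exp]
      linarith [mul_le_mul_of_nonneg_left l hs.le]
    · have hb := (pow_pos hR0 2).trans_le (not_lt.1 hbR)
      have lb := log_le_log hb (le_jb b)
      have l' := log_le_log (by positivity) (not_le.1 hfar).le
      rw [log_mul_sq hμ hR0, log_sq] at l'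
      simp only [rpow_def_of_pos hA, rpow_def_of_pos hμ, rpow_def_of_pos hB,
        rpow_def_of_pos hR0, rpow_def_of_pos hb, ← exp_add, exp_le_exp]
      linarith [mul_le_mul_of_nonneg_left l hs.le, mul_le_mul_of_nonneg_left l' hs.le,
        mul_le_mul_of_nonneg_left lb hs.le, mul_nonneg hs.le lA, mul_nonneg hs.le lR]

lemma pairProfile_le_vProfile (hs : 0 < s) (h6 : 6 * s ≤ n) (hμ : 0 < μ) (hR : 1 ≤ R)
    (hmax : μ * jb a ^ 2 ≤ jb b ^ 2) (hsep : R ^ 2 ≤ μ * jb a ^ 2 ∨ μ * R ^ 2 ≤ jb b ^ 2) :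
    pairProfile n s μ a b ≤ vProfile n s R a + μ ^ (((n:ℝ) + 2*s)/2) * vProfile n s R b := by
  have hR0 : 0 < R := one_pos.trans_le hR
  have hvb : 0 ≤ μ ^ (((n:ℝ) + 2*s)/2) * vProfile n s R b :=
    mul_nonneg (rpow_nonneg hμ.le _) (vProfile_pos hR0 b).le
  by_cases hn : (n:ℝ) = 6 * s
  · rw [vProfile, if_pos hn]
    split_ifs with haR
    · exact pairProfile_le_inner_of_eq hs hn hμ hR hmax hsep
    · exact le_add_of_le_of_nonneg
        (pairProfile_le_outer_of_eq hs hn hμ hR hmax (not_lt.1 haR)) hvb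
  · rw [vProfile, if_neg hn]
    split_ifs with haR
    · exact pairProfile_le_inner_of_ne hs h6 hn hμ hR0 hmax hsep
    · exact le_add_of_le_of_nonneg
        (pairProfile_le_outer_of_ne hs h6 hμ hR0 hmax (not_lt.1 haR)) hvb

end Core

section Pair

open Real

variable {n : ℕ} {s : ℝ}

lemma bubble_rpow_mul_bubble_eq (hs : 0 < s) (hn : 2 * s < n) {zi zj : Euc n} {li lj : ℝ}
    (hli : 0 < li) (hlj : 0 < lj) (x : Euc n) :
    bubble n s zi li x ^ (pexp n s - 1) * bubble n s zj lj x =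
      bubbleConst n s ^ pexp n s * li ^ (((n:ℝ) + 2*s)/2) *
        pairProfile n s (lj / li) (li * ‖x - zi‖) (lj * ‖x - zj‖) := by
  have hα := bubbleConst_pos hs hn
  have hB := jb_pos (lj * ‖x - zj‖)
  have hα' : bubbleConst n s ^ pexp n s = bubbleConst n s ^ (pexp n s - 1) * bubbleConst n s := by
    rw [← rpow_add_one hα.ne', sub_add_cancel]
  rw [bubble_rpow_pexp_sub_one hs hn _ hli, bubble_eq, pairProfile, hα',
    rpow_def_of_pos (div_pos hlj (pow_pos hB 2)), rpow_def_of_pos hli, rpow_def_of_pos hli,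
    rpow_def_of_pos (div_pos hlj hli), rpow_def_of_pos hB, log_div hlj.ne' (pow_pos hB 2).ne',
    log_div hlj.ne' hli.ne', log_sq]
  have key : exp (log li * (2 * s)) * exp ((log lj - 2 * log (jb (lj * ‖x - zj‖))) *
        (((n:ℝ) - 2 * s) / 2)) =
      exp (log li * (((n:ℝ) + 2 * s) / 2)) * (exp ((log lj - log li) * (((n:ℝ) - 2 * s) / 2)) *
        exp (log (jb (lj * ‖x - zj‖)) * (2 * s - n))) := by
    simp only [← exp_add]
    ring_nf
  linear_combination (bubbleConst n s ^ (pexp n s - 1) * bubbleConst n s *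
    jb (li * ‖x - zi‖) ^ (-(4 * s))) * key

lemma bubble_rpow_mul_bubble_le (hs : 0 < s) (h6 : 6 * s ≤ n) {R : ℝ} (hR : 1 ≤ R)
    {zi zj : Euc n} {li lj : ℝ} (hli : 0 < li) (hlj : 0 < lj) (hsep : 2 * R ≤ interR zi zj li lj)
    {x : Euc n} (hmax : bubble n s zj lj x ≤ bubble n s zi li x) :
    bubble n s zi li x ^ (pexp n s - 1) * bubble n s zj lj x ≤
      bubbleConst n s ^ pexp n s *
        (vin n s R zi li x + vout n s R zi li x + (vin n s R zj lj x + vout n s R zj lj x)) := by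
  have hn : 2 * s < n := by linarith
  have hμ := div_pos hlj hli
  have hlj' : lj ^ (((n:ℝ) + 2*s)/2) = li ^ (((n:ℝ) + 2*s)/2) * (lj / li) ^ (((n:ℝ) + 2*s)/2) := by
    rw [← mul_rpow hli.le hμ.le, mul_div_cancel₀ _ hli.ne']
  have hprofile := pairProfile_le_vProfile hs h6 hμ hR (mul_jb_sq_le_of_bubble_le hs hn hli hlj hmax)
    (interR_dichotomy hli hlj (zero_le_one.trans hR) hsep x)
  rw [bubble_rpow_mul_bubble_eq hs hn hli hlj, vin_add_vout_eq, vin_add_vout_eq, hlj', mul_assoc]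
  refine le_of_le_of_eq (mul_le_mul_of_nonneg_left (mul_le_mul_of_nonneg_left hprofile
    (by positivity)) (rpow_nonneg (bubbleConst_pos hs hn).le _)) ?_
  ring

end Pair

section Sums

open Real Finset

lemma rpow_sub_rpow_le {p A B : ℝ} (hp : 1 ≤ p) (hB : 0 ≤ B) (hBA : B ≤ A) :
    A ^ p - B ^ p ≤ p * A ^ (p - 1) * (A - B) := by
  rcases (hB.trans hBA).eq_or_lt with hA | hA
  · obtain rfl : B = 0 := by linarith
    simp [← hA, zero_rpow (by linarith : p ≠ 0)]
  · have h := one_add_mul_self_le_rpow_one_add (by linarith [div_nonneg hB hA.le] : -1 ≤ B / A - 1) hp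
    rw [add_sub_cancel, div_rpow hB hA.le, le_div_iff₀ (rpow_pos_of_pos hA p)] at h
    rw [rpow_sub_one hA.ne']
    have : (1 + p * (B / A - 1)) * A ^ p = A ^ p - p * (A ^ p / A) * (A - B) := by
      field_simp
      ring
    linarith

variable {ι : Type*} [Fintype ι] [DecidableEq ι] {u : ι → ℝ} {p : ℝ} {i : ι}

lemma rpow_sum_sub_rpow_le (hu : ∀ k, 0 ≤ u k) (hp : 1 ≤ p) (hi : ∀ k, u k ≤ u i) :
    (∑ k, u k) ^ p - u i ^ p ≤
      p * (Fintype.card ι : ℝ) ^ (p - 1) * ∑ j ∈ univ.erase i, u i ^ (p - 1) * u j := by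
  have hsum : ∑ k, u k = u i + ∑ j ∈ univ.erase i, u j := (add_sum_erase _ _ (mem_univ i)).symm
  have hle_sum : u i ≤ ∑ k, u k := by
    rw [hsum]
    linarith [sum_nonneg fun j (_ : j ∈ univ.erase i) => hu j]
  have hsum_le : ∑ k, u k ≤ Fintype.card ι * u i := by
    simpa using sum_le_card_nsmul univ u (u i) fun k _ => hi k
  have hpow : (∑ k, u k) ^ (p - 1) ≤ (Fintype.card ι : ℝ) ^ (p - 1) * u i ^ (p - 1) := by
    rw [← mul_rpow (Nat.cast_nonneg _) (hu i)]
    exact rpow_le_rpow ((hu i).trans hle_sum) hsum_le (by linarith)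
  calc (∑ k, u k) ^ p - u i ^ p ≤ p * (∑ k, u k) ^ (p - 1) * ((∑ k, u k) - u i) :=
        rpow_sub_rpow_le hp (hu i) hle_sum
    _ ≤ p * ((Fintype.card ι : ℝ) ^ (p - 1) * u i ^ (p - 1)) * ((∑ k, u k) - u i) := by gcongr
    _ = _ := by rw [hsum, add_sub_cancel_left, ← mul_sum]; ring

lemma abs_rpow_sum_sub_sum_rpow_le (hu : ∀ k, 0 ≤ u k) (hp : 1 ≤ p) (hi : ∀ k, u k ≤ u i)
    {M : ℝ} (hM0 : 0 ≤ M) (hM : ∀ j, j ≠ i → u i ^ (p - 1) * u j ≤ M) :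
    |(∑ k, u k) ^ p - ∑ k, u k ^ p| ≤
      (p * (Fintype.card ι : ℝ) ^ (p - 1) + 1) * Fintype.card ι * M := by
  have hfirst := rpow_sum_sub_rpow_le hu hp hi
  set ν : ℝ := (Fintype.card ι : ℝ)
  set P := ∑ j ∈ univ.erase i, u i ^ (p - 1) * u j
  have hfirst0 : 0 ≤ (∑ k, u k) ^ p - u i ^ p :=
    sub_nonneg.2 (rpow_le_rpow (hu i) (single_le_sum (fun k _ => hu k) (mem_univ i)) (by linarith))
  have hrest : ∑ j ∈ univ.erase i, u j ^ p ≤ P := by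
    refine sum_le_sum fun j _ => ?_
    rw [← sub_add_cancel p 1, rpow_add_one' (hu j) (by linarith : (0:ℝ) < p - 1 + 1).ne',
      sub_add_cancel]
    exact mul_le_mul_of_nonneg_right (rpow_le_rpow (hu j) (hi j) (by linarith)) (hu j)
  have hrest0 : 0 ≤ ∑ j ∈ univ.erase i, u j ^ p := sum_nonneg fun j _ => rpow_nonneg (hu j) p
  have hP : P ≤ ν * M := by
    calc P ≤ (univ.erase i).card • M :=
          sum_le_card_nsmul _ _ _ fun j hj => hM j (ne_of_mem_erase hj)
      _ ≤ ν * M := by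
        rw [nsmul_eq_mul]
        exact mul_le_mul_of_nonneg_right (Nat.cast_le.2 (card_le_univ _)) hM0
  have hK : 0 ≤ p * ν ^ (p - 1) := mul_nonneg (by linarith) (rpow_nonneg (Nat.cast_nonneg _) _)
  have hKP := mul_nonneg hK (hrest0.trans hrest)
  have := mul_le_mul_of_nonneg_left hP (by linarith : 0 ≤ p * ν ^ (p - 1) + 1)
  rw [← add_sum_erase univ (fun k => u k ^ p) (mem_univ i), abs_le]
  constructor <;> linarith

end Sums

section Interaction

open Real

variable {n ν : ℕ} {s : ℝ}

lemma interR_nonneg {zi zj : Euc n} {li lj : ℝ} : 0 ≤ interR zi zj li lj :=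
  (sqrt_nonneg _).trans ((le_max_left _ _).trans (le_max_left _ _))

lemma two_le_interR_of_interq_le (hn : 2 * s < n) {zi zj : Euc n} {li lj : ℝ}
    (hli : 0 < li) (hlj : 0 < lj) (h : interq n s zi zj li lj ≤ 12 ^ (-(((n:ℝ) - 2*s)/2))) :
    2 ≤ interR zi zj li lj := by
  have hQ : 12 ≤ li / lj + lj / li + li * lj * ‖zi - zj‖ ^ 2 := by
    by_contra! hQ
    exact (rpow_lt_rpow_of_neg (by positivity) hQ (by linarith)).not_ge h
  have two_le_sqrt {t : ℝ} (ht : 4 ≤ t) : 2 ≤ √t := (le_sqrt' two_pos).2 (by linarith)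
  rcases le_or_gt 4 (li / lj) with h₁ | h₁
  · exact (two_le_sqrt h₁).trans ((le_max_left _ _).trans (le_max_left _ _))
  rcases le_or_gt 4 (lj / li) with h₂ | h₂
  · exact (two_le_sqrt h₂).trans ((le_max_right _ _).trans (le_max_left _ _))
  have h₃ := two_le_sqrt (by linarith : 4 ≤ li * lj * ‖zi - zj‖ ^ 2)
  rw [sqrt_mul (by positivity), sqrt_sq (norm_nonneg _)] at h₃
  exact h₃.trans (le_max_right _ _)

variable {z : Fin ν → Euc n} {lam : Fin ν → ℝ}

lemma one_le_scrR (hν : 2 ≤ ν)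
    (h : ∀ i j, i ≠ j → 2 ≤ interR (z i) (z j) (lam i) (lam j)) : 1 ≤ scrR n ν z lam := by
  have hne : {r : ℝ | ∃ i j : Fin ν, i ≠ j ∧ r = interR (z i) (z j) (lam i) (lam j)}.Nonempty :=
    ⟨_, ⟨0, by omega⟩, ⟨1, by omega⟩, by simp [Fin.ext_iff], rfl⟩
  have := le_csInf hne (by rintro r ⟨i, j, hij, rfl⟩; exact h i j hij)
  rw [scrR]
  linarith

lemma two_mul_scrR_le_interR {i j : Fin ν} (hij : i ≠ j) :
    2 * scrR n ν z lam ≤ interR (z i) (z j) (lam i) (lam j) := by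
  have hbdd : BddBelow {r : ℝ | ∃ i j : Fin ν, i ≠ j ∧ r = interR (z i) (z j) (lam i) (lam j)} :=
    ⟨0, by rintro r ⟨i, j, -, rfl⟩; exact interR_nonneg⟩
  have := csInf_le hbdd ⟨i, j, hij, rfl⟩
  rw [scrR]
  linarith

lemma vin_add_vout_pos {R : ℝ} (hR : 0 < R) (z : Euc n) {l : ℝ} (hl : 0 < l) (x : Euc n) :
    0 < vin n s R z l x + vout n s R z l x := by
  rw [vin_add_vout_eq]
  have := vProfile_pos hR (l * ‖x - z‖) (n := n) (s := s)
  positivity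

lemma add_le_mcV (hR : 0 < scrR n ν z lam) (hlam : ∀ i, 0 < lam i) {i j : Fin ν} (hij : i ≠ j)
    (x : Euc n) :
    vin n s (scrR n ν z lam) (z i) (lam i) x + vout n s (scrR n ν z lam) (z i) (lam i) x +
      (vin n s (scrR n ν z lam) (z j) (lam j) x + vout n s (scrR n ν z lam) (z j) (lam j) x) ≤
      mcV n s ν z lam x := by
  rw [mcV]
  refine le_of_eq_of_le (Finset.sum_pair (f := fun k => vin n s (scrR n ν z lam) (z k) (lam k) x +
    vout n s (scrR n ν z lam) (z k) (lam k) x) hij).symm ?_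
  exact Finset.sum_le_sum_of_subset_of_nonneg (Finset.subset_univ _)
    fun k _ _ => (vin_add_vout_pos hR (z k) (hlam k) x).le

lemma mcV_pos (hR : 0 < scrR n ν z lam) (hlam : ∀ i, 0 < lam i) (i : Fin ν) (x : Euc n) :
    0 < mcV n s ν z lam x :=
  (vin_add_vout_pos hR (z i) (hlam i) x).trans_le <| Finset.single_le_sum
    (fun k _ => (vin_add_vout_pos hR (z k) (hlam k) x).le) (Finset.mem_univ i)

end Interaction

/-- Lemma 3.2: bound on the `**`-norm of the error term, `n ≥ 6s`. -/
theorem stmt3 (n ν : ℕ) (s : ℝ) (hs : 0 < s) (hν : 2 ≤ ν) (h6 : 6*s ≤ (n:ℝ)) :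
    ∃ δ C : ℝ, 0 < δ ∧ 0 < C ∧
      ∀ (z : Fin ν → Euc n) (lam : Fin ν → ℝ), (∀ i, 0 < lam i) →
        deltaInteracting n s ν z lam δ →
        wnorm n
          (fun x => (sigmaB n s ν z lam x) ^ (pexp n s) -
            ∑ i, (bubble n s (z i) (lam i) x) ^ (pexp n s))
          (mcV n s ν z lam) ≤ ENNReal.ofReal C := by
  have hn : 2 * s < n := by linarith
  have hα := bubbleConst_pos hs hn
  have hp := one_lt_pexp hs hn
  refine ⟨12 ^ (-(((n:ℝ) - 2*s)/2)),
    (pexp n s * ν ^ (pexp n s - 1) + 1) * ν * bubbleConst n s ^ pexp n s, by positivity, ?_, ?_⟩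
  · have : (0:ℝ) < ν := by exact_mod_cast (by omega : 0 < ν)
    positivity
  intro z lam hlam hδ
  have hR : 1 ≤ scrR n ν z lam := one_le_scrR hν fun i j hij =>
    two_le_interR_of_interq_le hn (hlam i) (hlam j) (hδ i j hij)
  refine iSup_le fun x => ENNReal.ofReal_le_ofReal ?_
  have : Nonempty (Fin ν) := ⟨⟨0, by omega⟩⟩
  obtain ⟨i, hi⟩ := Finite.exists_max fun k => bubble n s (z k) (lam k) x
  have hV := mcV_pos (s := s) (by linarith) hlam i x
  have hpair : ∀ j, j ≠ i → bubble n s (z i) (lam i) x ^ (pexp n s - 1) *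
      bubble n s (z j) (lam j) x ≤ bubbleConst n s ^ pexp n s * mcV n s ν z lam x := fun j hj =>
    (bubble_rpow_mul_bubble_le hs h6 hR (hlam i) (hlam j) (two_mul_scrR_le_interR hj.symm)
      (hi j)).trans (mul_le_mul_of_nonneg_left (add_le_mcV (by linarith) hlam hj.symm x)
        (rpow_nonneg hα.le _))
  have key := abs_rpow_sum_sub_sum_rpow_le (fun k => (bubble_pos hs hn (z k) (hlam k) x).le)
    hp.le hi (by positivity) hpair
  rw [Fintype.card_fin] at key
  rw [div_le_iff₀ hV]
  exact key.trans_eq (by ring)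

end
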